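/- Let φ : ℝᵈ → ℝ be continuous and bounded, and for δ > 0 let W_δ(x₁,x₂) = V_{δ}(x₁,x₂)/V_δ², where V_δ(x₁,x₂) is the volume of B(x₁,δ)∩B(x₂,δ) and V_δ the volume of a ball of radius δ. Then for φ, ψ continuous with compact support, ∫∫_{ℝᵈ×ℝᵈ} φ(x₁) ψ(x₂) W_δ(x₁,x₂) dx₁ dx₂ → ∫_{ℝᵈ} φ(x) ψ(x) dx as δ → 0. -/

import Mathlib

/-!
By Tonelli, `∫ μ(B(x, δ) ∩ B(y, δ)) dy = μ(B(x, δ)) · μ(B(0, δ))`, so `W_δ(x, ·)` is a nonnegative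
kernel of total mass one supported in `B(x, 2δ)`: a family of peak functions at `x`. Hence
`∫ W_δ(x, y) ψ(y) dy → ψ(x)` for every `x`, with the bound `sup |ψ|`, and dominated convergence in
`x` gives the theorem.
-/

open MeasureTheory Filter Topology Metric Set

section BallOverlap

variable {E : Type*} [NormedAddCommGroup E] [MeasurableSpace E] (μ : Measure E)

noncomputable def ballOverlapKernel (δ : ℝ) (x y : E) : ℝ :=
  (μ (ball x δ ∩ ball y δ)).toReal / (μ (ball (0 : E) δ)).toReal ^ 2

theorem ballOverlapKernel_nonneg (δ : ℝ) (x y : E) : 0 ≤ ballOverlapKernel μ δ x y := by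
  unfold ballOverlapKernel; positivity

theorem ballOverlapKernel_eq_zero {δ : ℝ} {x y : E} (h : 2 * δ ≤ dist x y) :
    ballOverlapKernel μ δ x y = 0 := by
  rw [ballOverlapKernel, (ball_disjoint_ball (by linarith)).inter_eq]
  simp

variable [NormedSpace ℝ E] [BorelSpace E] [FiniteDimensional ℝ E] [μ.IsAddHaarMeasure]

theorem lintegral_measure_inter_ball {s : Set E} (hs : MeasurableSet s) (δ : ℝ) :
    ∫⁻ y, μ (s ∩ ball y δ) ∂μ = μ s * μ (ball (0 : E) δ) := by
  -- slice `{(y, z) | z ∈ s, dist z y < δ}` along either coordinate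
  set S : Set (E × E) := {p | p.2 ∈ s ∧ dist p.2 p.1 < δ}
  have hS : MeasurableSet S :=
    (measurable_snd hs).inter
      (isOpen_lt (continuous_snd.dist continuous_fst) continuous_const).measurableSet
  calc ∫⁻ y, μ (s ∩ ball y δ) ∂μ = μ.prod μ S := (Measure.prod_apply hS).symm
    _ = ∫⁻ z, s.indicator (fun _ => μ (ball (0 : E) δ)) z ∂μ := by
        rw [Measure.prod_apply_symm hS]
        refine lintegral_congr fun z => ?_
        by_cases hz : z ∈ s
        · simp only [S, indicator_of_mem hz, ← Measure.addHaar_ball_center μ z]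
          congr with y
          simp [hz, dist_comm]
        · simp [S, hz]
    _ = μ s * μ (ball (0 : E) δ) := by rw [lintegral_indicator_const hs, mul_comm]

theorem measurable_measure_ball_inter_ball (δ : ℝ) :
    Measurable fun p : E × E => μ (ball p.1 δ ∩ ball p.2 δ) :=
  measurable_measure_prodMk_left
    (s := {q : (E × E) × E | dist q.2 q.1.1 < δ ∧ dist q.2 q.1.2 < δ})
    ((isOpen_lt (continuous_snd.dist (continuous_fst.comp continuous_fst)) continuous_const).inter
      (isOpen_lt (continuous_snd.dist (continuous_snd.comp continuous_fst))
        continuous_const)).measurableSet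

variable {μ}

theorem integral_ballOverlapKernel {δ : ℝ} (hδ : 0 < δ) (x : E) :
    ∫ y, ballOverlapKernel μ δ x y ∂μ = 1 := by
  have hV : 0 < (μ (ball (0 : E) δ)).toReal :=
    ENNReal.toReal_pos (measure_ball_pos μ _ hδ).ne' measure_ball_lt_top.ne
  have hmass : ∫ y, (μ (ball x δ ∩ ball y δ)).toReal ∂μ = (μ (ball (0 : E) δ)).toReal ^ 2 := by
    rw [integral_toReal, lintegral_measure_inter_ball μ measurableSet_ball,
      Measure.addHaar_ball_center, ENNReal.toReal_mul, sq]
    · exact ((measurable_measure_ball_inter_ball μ δ).comp measurable_prodMk_left).aemeasurable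
    · exact Eventually.of_forall fun y =>
        (measure_mono inter_subset_left).trans_lt measure_ball_lt_top
  simp only [ballOverlapKernel]
  rw [integral_div, hmass, div_self (by positivity)]

-- a non-integrable function has integral `0`
theorem integrable_ballOverlapKernel {δ : ℝ} (hδ : 0 < δ) (x : E) :
    Integrable (ballOverlapKernel μ δ x) μ :=
  integrable_of_integral_eq_one (integral_ballOverlapKernel hδ x)

variable {F : Type*} [NormedAddCommGroup F] [NormedSpace ℝ F] {g : E → F}

theorem tendsto_integral_ballOverlapKernel_smul [CompleteSpace F] {x : E} (hg : Integrable g μ)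
    (hgx : ContinuousAt g x) :
    Tendsto (fun δ => ∫ y, ballOverlapKernel μ δ x y • g y ∂μ) (𝓝[>] 0) (𝓝 (g x)) := by
  refine tendsto_integral_peak_smul_of_integrable_of_tendsto measurableSet_ball
    (ball_mem_nhds x one_pos) measure_ball_lt_top.ne
    (Eventually.of_forall fun δ => ballOverlapKernel_nonneg μ δ x) ?_ ?_ ?_ hg hgx
  · intro u hu hxu
    obtain ⟨r, hr, hru⟩ := Metric.isOpen_iff.1 hu x hxu
    rw [Metric.tendstoUniformlyOn_iff]
    intro ε hε
    filter_upwards [Ioo_mem_nhdsGT (half_pos hr)] with δ hδ y hy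
    have hxy : r ≤ dist x y := by
      rw [dist_comm]; exact not_lt.1 fun h => hy (hru (mem_ball.2 h))
    simpa [ballOverlapKernel_eq_zero μ (by linarith [hδ.2] : 2 * δ ≤ dist x y)] using hε
  · refine tendsto_const_nhds.congr' ?_
    filter_upwards [Ioo_mem_nhdsGT one_half_pos] with δ hδ
    rw [setIntegral_eq_integral_of_forall_compl_eq_zero, integral_ballOverlapKernel hδ.1]
    intro y hy
    refine ballOverlapKernel_eq_zero μ ?_
    rw [dist_comm]
    linarith [hδ.2, not_lt.1 fun h => hy (mem_ball.2 h)]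
  · filter_upwards [self_mem_nhdsWithin] with δ hδ
    exact (integrable_ballOverlapKernel hδ x).aestronglyMeasurable

theorem norm_integral_ballOverlapKernel_smul_le {δ C : ℝ} (hδ : 0 < δ) (hC : ∀ y, ‖g y‖ ≤ C)
    (x : E) : ‖∫ y, ballOverlapKernel μ δ x y • g y ∂μ‖ ≤ C :=
  calc ‖∫ y, ballOverlapKernel μ δ x y • g y ∂μ‖ ≤ ∫ y, ballOverlapKernel μ δ x y * C ∂μ := by
        refine norm_integral_le_of_norm_le ((integrable_ballOverlapKernel hδ x).mul_const C)
          (Eventually.of_forall fun y => ?_)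
        rw [norm_smul, Real.norm_of_nonneg (ballOverlapKernel_nonneg μ δ x y)]
        exact mul_le_mul_of_nonneg_left (hC y) (ballOverlapKernel_nonneg μ δ x y)
    _ = C := by rw [integral_mul_const, integral_ballOverlapKernel hδ x, one_mul]

theorem tendsto_integral_smul_integral_ballOverlapKernel_smul [CompleteSpace F] {f : E → ℝ}
    {C : ℝ} (hf : Integrable f μ) (hg : Integrable g μ) (hgc : Continuous g) (hC : ∀ y, ‖g y‖ ≤ C) :
    Tendsto (fun δ => ∫ x, f x • ∫ y, ballOverlapKernel μ δ x y • g y ∂μ ∂μ) (𝓝[>] 0)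
      (𝓝 (∫ x, f x • g x ∂μ)) := by
  refine tendsto_integral_filter_of_dominated_convergence (fun x => ‖f x‖ * C) ?_ ?_
    (hf.norm.mul_const C) (Eventually.of_forall fun x =>
      tendsto_const_nhds.smul (tendsto_integral_ballOverlapKernel_smul hg hgc.continuousAt))
  · refine Eventually.of_forall fun δ => hf.aestronglyMeasurable.smul ?_
    have hK : Measurable fun p : E × E => ballOverlapKernel μ δ p.1 p.2 :=
      (measurable_measure_ball_inter_ball μ δ).ennreal_toReal.div_const _
    exact (hK.aestronglyMeasurable.smul
      (hgc.comp continuous_snd).aestronglyMeasurable).integral_prod_right'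
  · filter_upwards [self_mem_nhdsWithin] with δ hδ
    refine Eventually.of_forall fun x => ?_
    rw [norm_smul]
    exact mul_le_mul_of_nonneg_left (norm_integral_ballOverlapKernel_smul_le hδ hC x)
      (norm_nonneg _)

end BallOverlap

theorem stmt_11_general (d : ℕ)
    (φ ψ : EuclideanSpace ℝ (Fin d) → ℝ)
    (hφ : Continuous φ) (hφc : HasCompactSupport φ)
    (hψ : Continuous ψ) (hψc : HasCompactSupport ψ) :
    Tendsto
      (fun δ : ℝ => ∫ x₁, ∫ x₂, φ x₁ * ψ x₂ *
        ((volume (Metric.ball x₁ δ ∩ Metric.ball x₂ δ)).toReal /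
          ((volume (Metric.ball (0 : EuclideanSpace ℝ (Fin d)) δ)).toReal) ^ 2))
      (𝓝[>] 0) (𝓝 (∫ x, φ x * ψ x)) := by
  obtain ⟨C, hC⟩ := hψc.exists_bound_of_continuous hψ
  have h := tendsto_integral_smul_integral_ballOverlapKernel_smul (μ := volume)
    (hφ.integrable_of_hasCompactSupport hφc) (hψ.integrable_of_hasCompactSupport hψc) hψ hC
  simp only [smul_eq_mul] at h
  refine h.congr fun δ => integral_congr_ae (Eventually.of_forall fun x₁ => ?_)
  rw [← integral_const_mul]
  congr with x₂
  rw [ballOverlapKernel]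
  ring

theorem stmt_11 (d : ℕ) (hd : 1 ≤ d)
    (φ ψ : EuclideanSpace ℝ (Fin d) → ℝ)
    (hφ : Continuous φ) (hφc : HasCompactSupport φ)
    (hψ : Continuous ψ) (hψc : HasCompactSupport ψ) :
    Tendsto
      (fun δ : ℝ => ∫ x₁, ∫ x₂, φ x₁ * ψ x₂ *
        ((volume (Metric.ball x₁ δ ∩ Metric.ball x₂ δ)).toReal /
          ((volume (Metric.ball (0 : EuclideanSpace ℝ (Fin d)) δ)).toReal) ^ 2))
      (𝓝[>] 0) (𝓝 (∫ x, φ x * ψ x)) :=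
  stmt_11_general d φ ψ hφ hφc hψ hψc
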